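/- arXiv:1509.04248 — 4 statements merged into one kernel-verified Lean document; each statement's English description precedes it below -/
import Mathlib

section
/- Let U = 1 + Σ_{i≥1} a_i T^i ∈ C[[T]] be a formal power series with all coefficients a_i ∈ R, and let s be a nonnegative integer. Then the set of tuples (b_1, …, b_s) ∈ C^s such that the coefficient of T^{ip} in U − (1 + Σ_{i=1}^s b_i T^i)^p vanishes for every i = 1, …, s is nonempty and finite; indeed it has at most p^s elements. -/
/-!
Let `E_i` be the coefficient of `T^(i p)` in `(1 + X_1 T + ⋯ + X_s T^s)^p`, so that the tuples in
question are the solutions of `E_i(b) = u_i`, `u_i` being the coefficient of `T^(i p)` in `U`.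
Giving `X_j` weight `j`, `E_i` is weighted homogeneous of weight `i p` and of degree at most `p`,
and it contains `X_i^p` with coefficient `1`. A convexity argument shows that `X_i^p` is its unique
monomial of largest concave weight `∑ j (s + 1 - j) d_j`, so rewriting `X_i^p = E_i - (E_i - X_i^p)`
reduces every monomial to one of the `p^s` monomials with all exponents `< p`.

Hence `C[X] / (E_i - u_i)` has dimension at most `p^s`, which bounds the number of its points, and
`C[X]` is a finite module over `C[E_1, …, E_s]`. The latter forces `E_1, …, E_s` to be
algebraically independent (transcendence degree), and lying over together with the
Nullstellensatz produces a solution.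
-/

open MvPolynomial

theorem PowerSeries.coeff_one_add_monomial_pow {R : Type*} [CommRing R] {k : ℕ} (hk : 0 < k)
    (a : R) (m : ℕ) :
    PowerSeries.coeff (k * m) ((1 + PowerSeries.monomial k a) ^ m) = a ^ m := by
  have hdeg : (1 + Polynomial.monomial k a).natDegree ≤ k :=
    (Polynomial.natDegree_add_le _ _).trans (max_le (by simp) (Polynomial.natDegree_monomial_le _))
  rw [← Polynomial.coe_monomial, ← Polynomial.coe_one, ← Polynomial.coe_add, ← Polynomial.coe_pow,
    Polynomial.coeff_coe, mul_comm, Polynomial.coeff_pow_of_natDegree_le hdeg]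
  simp [Polynomial.coeff_one, hk.ne']

theorem MvPolynomial.mem_of_forall_monomial_mem {R σ : Type*} [CommSemiring R]
    {M : Submodule R (MvPolynomial σ R)} {f : MvPolynomial σ R}
    (h : ∀ d ∈ f.support, monomial d (1 : R) ∈ M) : f ∈ M := by
  rw [f.as_sum]
  refine M.sum_mem fun d hd => ?_
  rw [show monomial d (coeff d f) = coeff d f • monomial d (1 : R) by
    rw [smul_monomial, smul_eq_mul, mul_one]]
  exact M.smul_mem _ (h d hd)

namespace GenericPowerCoeff

-- `(j + 1) (n - j) = (n + 1) (j + 1) - (j + 1)^2` is strictly concave in the weight `j + 1`.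
def reductionWeight (n : ℕ) (j : Fin n) : ℕ := ((j : ℕ) + 1) * (n - j)

theorem reductionWeight_single_sub_weight {n p : ℕ} {i : Fin n} {d : Fin n →₀ ℕ}
    (hw : Finsupp.weight (fun j : Fin n => (j : ℕ) + 1) d = ((i : ℕ) + 1) * p) :
    (Finsupp.weight (reductionWeight n) (Finsupp.single i p) : ℤ) -
        Finsupp.weight (reductionWeight n) d =
      ∑ j, (d j : ℤ) * ((j : ℤ) - i) ^ 2 + ((i : ℤ) + 1) ^ 2 * (p - d.degree) := by
  have hκ (j : Fin n) : (reductionWeight n j : ℤ) = ((j : ℤ) + 1) * (n - j) := by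
    rw [reductionWeight]; push_cast [Nat.cast_sub j.isLt.le]; ring
  have hwZ : ∑ j, (d j : ℤ) * ((j : ℤ) + 1) = ((i : ℤ) + 1) * p := by
    simpa [Finsupp.weight_eq_sum] using congrArg (Nat.cast : ℕ → ℤ) hw
  rw [Finsupp.weight_single, Finsupp.weight_eq_sum, Finsupp.degree_eq_sum]
  simp only [smul_eq_mul]
  push_cast
  simp only [hκ]
  have h0 : ∑ j : Fin n, ((d j : ℤ) * (((j : ℤ) + 1) * (n - j)) + (d j : ℤ) * ((j : ℤ) - i) ^ 2 -
      ((i : ℤ) + 1) ^ 2 * d j - (n - 1 - 2 * i) * ((d j : ℤ) * ((j : ℤ) + 1))) = 0 :=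
    Finset.sum_eq_zero fun j _ => by ring
  simp only [Finset.sum_sub_distrib, Finset.sum_add_distrib, ← Finset.mul_sum] at h0
  linear_combination -h0 - (n - 1 - 2 * (i : ℤ)) * hwZ

theorem weight_lt_reductionWeight_single {n p : ℕ} {i : Fin n} {d : Fin n →₀ ℕ}
    (hw : Finsupp.weight (fun j : Fin n => (j : ℕ) + 1) d = ((i : ℕ) + 1) * p)
    (hdeg : d.degree ≤ p) (hne : d ≠ Finsupp.single i p) :
    Finsupp.weight (reductionWeight n) d <
      Finsupp.weight (reductionWeight n) (Finsupp.single i p) := by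
  by_contra! hle
  have hdefect := reductionWeight_single_sub_weight hw
  have hterm (j : Fin n) : 0 ≤ (d j : ℤ) * ((j : ℤ) - i) ^ 2 := by positivity
  have hsum := Finset.sum_nonneg fun j (_ : j ∈ Finset.univ) => hterm j
  have hdegZ : (d.degree : ℤ) ≤ p := by exact_mod_cast hdeg
  have hleZ : (Finsupp.weight (reductionWeight n) (Finsupp.single i p) : ℤ) ≤
      Finsupp.weight (reductionWeight n) d := by exact_mod_cast hle
  have hsq : 0 < ((i : ℤ) + 1) ^ 2 := by positivity
  have hsum0 : ∑ j, (d j : ℤ) * ((j : ℤ) - i) ^ 2 = 0 := by nlinarith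
  have hdeg_eq : d.degree = p := by
    have : (d.degree : ℤ) = p := by nlinarith
    exact_mod_cast this
  have hzero (j : Fin n) (hj : j ≠ i) : d j = 0 := by
    have h := (Finset.sum_eq_zero_iff_of_nonneg fun j _ => hterm j).1 hsum0 j (Finset.mem_univ j)
    have hji : (j : ℤ) - i ≠ 0 := sub_ne_zero.2 fun h => hj (Fin.ext (by omega))
    exact_mod_cast (mul_eq_zero.1 h).resolve_right (pow_ne_zero 2 hji)
  apply hne
  ext j
  by_cases hj : j = i
  · subst hj
    rw [Finsupp.single_eq_same, ← hdeg_eq, Finsupp.degree_eq_sum,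
      Finset.sum_eq_single j (fun k _ hk => hzero k hk) (by simp)]
  · rw [hzero j hj, Finsupp.single_eq_of_ne hj]

variable (C : Type*) [CommRing C]

noncomputable def genericSeries (n : ℕ) : PowerSeries (MvPolynomial (Fin n) C) :=
  1 + ∑ j : Fin n, PowerSeries.monomial ((j : ℕ) + 1) (X j)

noncomputable def genericCoeff (p n : ℕ) (i : Fin n) : MvPolynomial (Fin n) C :=
  PowerSeries.coeff (((i : ℕ) + 1) * p) (genericSeries C n ^ p)

variable {C} {p n : ℕ}

theorem aeval_genericCoeff {A : Type*} [CommRing A] [Algebra C A] (b : Fin n → A) (i : Fin n) :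
    aeval b (genericCoeff C p n i) = PowerSeries.coeff (((i : ℕ) + 1) * p)
      ((1 + ∑ j : Fin n, PowerSeries.monomial ((j : ℕ) + 1) (b j)) ^ p) := by
  have : PowerSeries.map (aeval b).toRingHom (genericSeries C n) =
      1 + ∑ j : Fin n, PowerSeries.monomial ((j : ℕ) + 1) (b j) := by
    ext k
    simp only [genericSeries, map_add, map_one, map_sum, PowerSeries.coeff_map,
      PowerSeries.coeff_monomial]
    congr 1
    refine Finset.sum_congr rfl fun j _ => ?_
    split_ifs <;> simp
  rw [genericCoeff, ← this, ← map_pow, PowerSeries.coeff_map]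
  rfl

theorem eval_genericCoeff (b : Fin n → C) (i : Fin n) :
    eval b (genericCoeff C p n i) = PowerSeries.coeff (((i : ℕ) + 1) * p)
      ((1 + ∑ j : Fin n, PowerSeries.monomial ((j : ℕ) + 1) (b j)) ^ p) := by
  rw [← coe_aeval_eq_eval]
  exact aeval_genericCoeff b i

theorem isWeightedHomogeneous_coeff_genericSeries (k : ℕ) :
    IsWeightedHomogeneous (fun j : Fin n => (j : ℕ) + 1)
      (PowerSeries.coeff k (genericSeries C n)) k := by
  rw [genericSeries, map_add, map_sum, PowerSeries.coeff_one]
  refine IsWeightedHomogeneous.add ?_ (IsWeightedHomogeneous.sum _ _ _ fun j _ => ?_)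
  · split_ifs with h
    · exact h ▸ isWeightedHomogeneous_one C _
    · exact isWeightedHomogeneous_zero C _ _
  · rw [PowerSeries.coeff_monomial]
    split_ifs with h
    · exact h ▸ isWeightedHomogeneous_X C _ j
    · exact isWeightedHomogeneous_zero C _ _

theorem totalDegree_coeff_genericSeries_le (k : ℕ) :
    (PowerSeries.coeff k (genericSeries C n)).totalDegree ≤ 1 := by
  rw [genericSeries, map_add, map_sum, PowerSeries.coeff_one]
  refine (totalDegree_add _ _).trans (max_le ?_ ((totalDegree_finsetSum _ _).trans
    (Finset.sup_le fun j _ => ?_)))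
  · split_ifs <;> simp
  · rw [PowerSeries.coeff_monomial]
    split_ifs
    · exact (totalDegree_monomial_le _ _).trans (by simp)
    · simp

theorem isWeightedHomogeneous_genericCoeff (i : Fin n) :
    IsWeightedHomogeneous (fun j : Fin n => (j : ℕ) + 1) (genericCoeff C p n i)
      (((i : ℕ) + 1) * p) := by
  rw [genericCoeff, PowerSeries.coeff_pow]
  refine IsWeightedHomogeneous.sum _ _ _ fun l hl => ?_
  rw [← (Finset.mem_finsuppAntidiag.1 hl).1]
  exact IsWeightedHomogeneous.prod _ _ _ fun t _ => isWeightedHomogeneous_coeff_genericSeries _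

theorem totalDegree_genericCoeff_le (i : Fin n) : (genericCoeff C p n i).totalDegree ≤ p := by
  rw [genericCoeff, PowerSeries.coeff_pow]
  refine (totalDegree_finsetSum _ _).trans (Finset.sup_le fun l _ => ?_)
  refine (totalDegree_finsetProd _ _).trans ?_
  simpa using Finset.sum_le_card_nsmul (Finset.range p) _ 1 fun t _ =>
    totalDegree_coeff_genericSeries_le (C := C) (n := n) (l t)

theorem coeff_single_genericCoeff (i : Fin n) :
    coeff (Finsupp.single i p) (genericCoeff C p n i) = 1 := by
  have hf : Function.Injective (fun _ : Unit => i) := Function.injective_of_subsingleton _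
  -- Killing every variable but `X i` turns the generic series into `1 + X i * T ^ (i + 1)`.
  have hX (j : Fin n) :
      killCompl hf (X j : MvPolynomial (Fin n) C) = if j = i then X () else 0 := by
    split_ifs with h
    · rw [h, ← rename_X (fun _ : Unit => i) (), killCompl_rename_app]
    · exact killCompl_monomial_eq_zero_of_notMem_range hf 1 (a := j) (by simp)
        (by simpa using h)
  have hsum : ∑ j : Fin n,
      PowerSeries.monomial ((j : ℕ) + 1) (killCompl hf (X j : MvPolynomial (Fin n) C)) =
      PowerSeries.monomial ((i : ℕ) + 1) (X ()) := by
    simp only [hX, apply_ite, map_zero, Finset.sum_ite_eq', Finset.mem_univ, if_true]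
  rw [← Finsupp.mapDomain_single (f := fun _ => i), ← coeff_killCompl hf,
    aeval_unique (killCompl hf), aeval_genericCoeff, Function.comp_def, hsum,
    PowerSeries.coeff_one_add_monomial_pow (Nat.succ_pos _), X_pow_eq_monomial, coeff_monomial,
    if_pos rfl]

theorem weight_lt_of_mem_support_genericCoeff_sub {i : Fin n} {g : Fin n →₀ ℕ}
    (hg : g ∈ (genericCoeff C p n i - monomial (Finsupp.single i p) 1).support) :
    Finsupp.weight (reductionWeight n) g <
      Finsupp.weight (reductionWeight n) (Finsupp.single i p) := by
  have hne : g ≠ Finsupp.single i p := by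
    rintro rfl
    simp [coeff_single_genericCoeff] at hg
  rw [mem_support_iff, coeff_sub, coeff_monomial, if_neg hne.symm, sub_zero] at hg
  exact weight_lt_reductionWeight_single (isWeightedHomogeneous_genericCoeff i hg)
    ((le_totalDegree (mem_support_iff.2 hg)).trans (totalDegree_genericCoeff_le i)) hne

theorem eq_top_of_genericCoeff_mul_mem (hp : 0 < p) (M : Submodule C (MvPolynomial (Fin n) C))
    (hstd : ∀ d : Fin n →₀ ℕ, (∀ j, d j < p) → monomial d (1 : C) ∈ M)
    (hmul : ∀ i f, f ∈ M → genericCoeff C p n i * f ∈ M) : M = ⊤ := by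
  suffices ∀ N d, Finsupp.weight (reductionWeight n) d = N → monomial d (1 : C) ∈ M from
    eq_top_iff.2 fun f _ => mem_of_forall_monomial_mem fun d _ => this _ d rfl
  intro N
  induction N using Nat.strong_induction_on with | _ N ih => ?_
  intro d hdN
  by_cases hstd' : ∀ j, d j < p
  · exact hstd d hstd'
  obtain ⟨i, hi⟩ := not_forall.1 hstd'
  replace hi := not_lt.1 hi
  set d' := d - Finsupp.single i p
  have hd : d = Finsupp.single i p + d' :=
    (add_tsub_cancel_of_le (Finsupp.single_le_iff.2 hi)).symm
  have hweight : N = Finsupp.weight (reductionWeight n) (Finsupp.single i p) +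
      Finsupp.weight (reductionWeight n) d' := by
    rw [← hdN, hd, map_add]
  have hsingle : 0 < Finsupp.weight (reductionWeight n) (Finsupp.single i p) := by
    rw [Finsupp.weight_single, smul_eq_mul, reductionWeight]
    exact Nat.mul_pos hp (Nat.mul_pos (Nat.succ_pos _) (Nat.sub_pos_of_lt i.isLt))
  have hd' : monomial d' (1 : C) ∈ M := ih _ (by omega) d' rfl
  have hsplit : monomial d (1 : C) = genericCoeff C p n i * monomial d' 1 -
      (genericCoeff C p n i - monomial (Finsupp.single i p) 1) * monomial d' 1 := by
    rw [sub_mul, sub_sub_cancel, monomial_mul, one_mul, ← hd]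
  rw [hsplit]
  refine M.sub_mem (hmul i _ hd') (mem_of_forall_monomial_mem fun e he => ?_)
  obtain ⟨g, hg, d'', hd'', rfl⟩ := Finset.mem_add.1 (support_mul _ _ he)
  rw [Finset.mem_singleton.1 (support_monomial_subset hd'')]
  refine ih _ ?_ _ rfl
  have := weight_lt_of_mem_support_genericCoeff_sub hg
  rw [map_add]
  omega

variable (C p n) in
noncomputable def stdMonomial (v : Fin n → Fin p) : MvPolynomial (Fin n) C :=
  monomial (Finsupp.equivFunOnFinite.symm fun j => (v j : ℕ)) 1

theorem monomial_mem_range_stdMonomial {d : Fin n →₀ ℕ} (hd : ∀ j, d j < p) :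
    monomial d (1 : C) ∈ Set.range (stdMonomial C p n) :=
  ⟨fun j => ⟨d j, hd j⟩, by simp [stdMonomial]⟩

variable (p) in
noncomputable def solutionIdeal (u : Fin n → C) : Ideal (MvPolynomial (Fin n) C) :=
  Ideal.span (Set.range fun i => genericCoeff C p n i - MvPolynomial.C (u i))

theorem span_range_mk_stdMonomial_eq_top (hp : 0 < p) (u : Fin n → C) :
    Submodule.span C (Set.range (Ideal.Quotient.mkₐ C (solutionIdeal p u) ∘ stdMonomial C p n)) =
      ⊤ := by
  set π := Ideal.Quotient.mkₐ C (solutionIdeal p u)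
  have hE (i : Fin n) : π (genericCoeff C p n i) = algebraMap C _ (u i) := by
    rw [← π.commutes, ← sub_eq_zero, ← map_sub]
    exact Ideal.Quotient.eq_zero_iff_mem.2 (Ideal.subset_span ⟨i, rfl⟩)
  have htop := eq_top_of_genericCoeff_mul_mem hp
    ((Submodule.span C (Set.range (π ∘ stdMonomial C p n))).comap π.toLinearMap)
    (fun d hd => Submodule.subset_span (by
      obtain ⟨v, hv⟩ := monomial_mem_range_stdMonomial (C := C) hd
      exact ⟨v, by simp [hv]⟩))
    (fun i f hf => by
      simp only [Submodule.mem_comap, AlgHom.toLinearMap_apply, map_mul, hE,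
        ← Algebra.smul_def] at hf ⊢
      exact Submodule.smul_mem _ _ hf)
  refine eq_top_iff.2 fun y _ => ?_
  obtain ⟨x, rfl⟩ := Ideal.Quotient.mkₐ_surjective C _ y
  exact (htop ▸ Submodule.mem_top : x ∈ Submodule.comap _ _)

theorem finite_adjoin_genericCoeff (hp : 0 < p) :
    Module.Finite (Algebra.adjoin C (Set.range (genericCoeff C p n))) (MvPolynomial (Fin n) C) := by
  set A := Algebra.adjoin C (Set.range (genericCoeff C p n))
  have htop := eq_top_of_genericCoeff_mul_mem hp
    ((Submodule.span A (Set.range (stdMonomial C p n))).restrictScalars C)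
    (fun d hd => Submodule.subset_span (monomial_mem_range_stdMonomial hd))
    (fun i f hf => Submodule.smul_mem _
      (⟨genericCoeff C p n i, Algebra.subset_adjoin ⟨i, rfl⟩⟩ : A) hf)
  exact ⟨Submodule.fg_def.2
    ⟨_, Set.finite_range _, (Submodule.restrictScalars_eq_top_iff _ _ _).1 htop⟩⟩

section Field

variable {C : Type*} [Field C] {p n : ℕ}

theorem solutions_finite_and_card_le (hp : 0 < p) (u : Fin n → C) :
    {b : Fin n → C | ∀ i, eval b (genericCoeff C p n i) = u i}.Finite ∧
      Nat.card {b : Fin n → C | ∀ i, eval b (genericCoeff C p n i) = u i} ≤ p ^ n := by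
  let I := solutionIdeal p u
  have hspan := span_range_mk_stdMonomial_eq_top hp u
  have : Module.Finite C (MvPolynomial (Fin n) C ⧸ I) :=
    ⟨Submodule.fg_def.2 ⟨_, Set.finite_range _, hspan⟩⟩
  have hrank : Module.finrank C (MvPolynomial (Fin n) C ⧸ I) ≤ p ^ n := by
    rw [← finrank_top, ← hspan]
    exact (finrank_range_le_card (R := C) _).trans (by simp)
  -- Solutions are `C`-algebra maps from the quotient to `C`, and those are linearly independent.
  let φ (b : {b : Fin n → C | ∀ i, eval b (genericCoeff C p n i) = u i}) :=
    Ideal.Quotient.liftₐ I (aeval b.1) fun a ha => by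
      refine (Ideal.span_le.2 ?_ : I ≤ RingHom.ker (aeval b.1)) ha
      rintro _ ⟨i, rfl⟩
      simp [b.2 i]
  have hφX b j : φ b (Ideal.Quotient.mk I (X j)) = b.1 j :=
    (Ideal.Quotient.lift_mk _ _ _).trans (aeval_X _ _)
  have hφ : Function.Injective φ := fun b b' h => Subtype.ext <| funext fun j => by
    simpa [hφX] using congr($h (Ideal.Quotient.mk I (X j)))
  exact ⟨Set.finite_coe_iff.1 (Finite.of_injective φ hφ),
    (Nat.card_le_card_of_injective φ hφ).trans ((card_algHom_le_finrank _ _ _).trans hrank)⟩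

theorem algebraicIndependent_genericCoeff (hp : 0 < p) :
    AlgebraicIndependent C (genericCoeff C p n) := by
  have := finite_adjoin_genericCoeff (C := C) (n := n) hp
  exact (Algebra.IsAlgebraic.isTranscendenceBasis_of_lift_le_trdeg_of_finite C
    (genericCoeff C p n) (by simp)).1

theorem exists_solution [IsAlgClosed C] (hp : 0 < p) (u : Fin n → C) :
    ∃ b : Fin n → C, ∀ i, eval b (genericCoeff C p n i) = u i := by
  have hind := algebraicIndependent_genericCoeff (C := C) (n := n) hp
  have := finite_adjoin_genericCoeff (C := C) (n := n) hp
  -- `m` is the point `u` under `C[Y] ≃ C[E]`; a maximal ideal of `C[X]` over it is a point `b`.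
  set m := RingHom.ker ((aeval u).comp hind.repr)
  have : m.IsMaximal := RingHom.ker_isMaximal_of_surjective _ fun c =>
    ⟨hind.aevalEquiv (MvPolynomial.C c), by simp [AlgebraicIndependent.repr]⟩
  obtain ⟨P, hPmax, hPm⟩ := Ideal.exists_ideal_over_maximal_of_isIntegral m
    (by rw [(RingHom.injective_iff_ker_eq_bot _).1 Subtype.val_injective]; exact bot_le)
  obtain ⟨b, rfl⟩ := eq_vanishingIdeal_singleton_of_isMaximal C hPmax
  refine ⟨b, fun i => ?_⟩
  have hmem : hind.aevalEquiv (X i - MvPolynomial.C (u i)) ∈ m := by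
    simp [m, AlgebraicIndependent.repr]
  rw [← hPm, Ideal.mem_comap, hind.algebraMap_aevalEquiv, mem_vanishingIdeal_singleton_iff] at hmem
  simpa [sub_eq_zero] using hmem

end Field

end GenericPowerCoeff

open GenericPowerCoeff in
theorem stmt4_general (p : ℕ) (hp : p.Prime)
    (C : Type) [Field C] [IsAlgClosed C]
    (U : PowerSeries C)
    (s : ℕ)
    (S : Set (Fin s → C))
    (hS : S = {b : Fin s → C | ∀ i ∈ Finset.Icc 1 s,
      PowerSeries.coeff (R := C) (i * p)
        (U - (1 + ∑ j : Fin s, PowerSeries.monomial (R := C) ((j : ℕ) + 1) (b j)) ^ p) = 0}) :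
    S.Nonempty ∧ S.Finite ∧ Nat.card ↥S ≤ p ^ s := by
  set u : Fin s → C := fun i => PowerSeries.coeff (((i : ℕ) + 1) * p) U
  have hS' : S = {b | ∀ i, eval b (genericCoeff C p s i) = u i} := by
    rw [hS]
    ext b
    simp only [Set.mem_ofPred_eq, map_sub, sub_eq_zero, eval_genericCoeff, u,
      eq_comm (a := PowerSeries.coeff _ U)]
    refine ⟨fun h i => h _ (Finset.mem_Icc.2 ⟨by omega, i.isLt⟩), fun h i hi => ?_⟩
    obtain ⟨hi1, his⟩ := Finset.mem_Icc.1 hi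
    simpa [Nat.sub_add_cancel hi1] using h ⟨i - 1, by omega⟩
  obtain ⟨hfin, hcard⟩ := solutions_finite_and_card_le hp.pos u
  exact hS' ▸ ⟨exists_solution hp.pos u, hfin, hcard⟩

/-- Let `U = 1 + Σ_{i ≥ 1} a_i T^i ∈ C[[T]]` have all coefficients in the valuation ring
`R = {x : C | 0 ≤ v x}`, and let `s ≥ 0`.  Then the set of tuples `(b_1, …, b_s) ∈ C^s` such
that the coefficient of `T^(i*p)` in `U - (1 + Σ_{i=1}^s b_i T^i)^p` vanishes for every
`i = 1, …, s` is nonempty and finite; indeed it has at most `p^s` elements. -/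
theorem stmt4 (p : ℕ) (hp : p.Prime)
    (C : Type) [Field C] [IsAlgClosed C] [CharZero C]
    (v : AddValuation C (WithTop ℝ)) (hvp : v (p : C) = 1)
    (U : PowerSeries C) (hU0 : PowerSeries.coeff (R := C) 0 U = 1)
    (hUR : ∀ i : ℕ, (0 : WithTop ℝ) ≤ v (PowerSeries.coeff (R := C) i U))
    (s : ℕ)
    (S : Set (Fin s → C))
    (hS : S = {b : Fin s → C | ∀ i ∈ Finset.Icc 1 s,
      PowerSeries.coeff (R := C) (i * p)
        (U - (1 + ∑ j : Fin s, PowerSeries.monomial (R := C) ((j : ℕ) + 1) (b j)) ^ p) = 0}) :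
    S.Nonempty ∧ S.Finite ∧ Nat.card ↥S ≤ p ^ s :=
  stmt4_general p hp C U s S hS
end

section
/- Let U = 1 + Σ_{i≥1} a_i T^i ∈ C[[T]] be a formal power series with all coefficients a_i ∈ R, and let r > 0 be a real number. Then there exists a polynomial H = 1 + Σ_{i=1}^s b_i T^i with all b_i ∈ R such that for every index n ≥ 1 divisible by p, the n-th coefficient c_n of U − H^p satisfies v(c_n) + n·r ≥ p/(p−1). -/
/-!
Put `L = p / (p - 1)`. If the coefficients `c_{pm}` (`1 ≤ m ≤ M`) of `U - H ^ p` all have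
valuation `≥ β`, replace `H` by `H + D` with `D = Σ_m d_m T^m` and `d_m ^ p = c_{pm}`. Since
`v(d_m) ≥ β / p`, both `(H + D) ^ p - H ^ p - D ^ p` and `D ^ p - Σ_m d_m ^ p T^{pm}` have
valuation `≥ v(p) + β / p = 1 + β / p`, so the new coefficients `c_{pm}` do too. Iterating from
`β = 0` gives bounds `L - L / p ^ t → L`. Choosing `M` with `p M r ≥ L`, the remaining gap is
absorbed by `n r ≥ p r` for `n = pm ≤ pM`, while for `m > M` already `n r ≥ L`.
-/

open PowerSeries Finset

namespace AddValuation

section PowerSeriesGE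

variable {R Γ₀ : Type*} [CommRing R] [LinearOrderedAddCommMonoidWithTop Γ₀]
  (v : AddValuation R Γ₀)

/-- The power series of Gauss valuation `v_0 ≥ γ`. -/
def powerSeriesGE (γ : Γ₀) : AddSubgroup R⟦X⟧ where
  carrier := {f | ∀ i, γ ≤ v (coeff i f)}
  zero_mem' i := by simp
  add_mem' hf hg i := by rw [_root_.map_add]; exact v.map_le_add (hf i) (hg i)
  neg_mem' hf i := by rw [_root_.map_neg, v.map_neg]; exact hf i

variable {v}

theorem powerSeriesGE_anti {a b : Γ₀} (h : a ≤ b) : v.powerSeriesGE b ≤ v.powerSeriesGE a :=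
  fun _ hf i => h.trans (hf i)

theorem monomial_mem_powerSeriesGE {γ : Γ₀} {c : R} (hc : γ ≤ v c) (n : ℕ) :
    monomial n c ∈ v.powerSeriesGE γ := by
  intro i
  rw [coeff_monomial]
  split_ifs
  · exact hc
  · simp

theorem C_mem_powerSeriesGE (c : R) : C c ∈ v.powerSeriesGE (v c) := by
  rw [← monomial_zero_eq_C_apply]
  exact monomial_mem_powerSeriesGE le_rfl 0

theorem one_mem_powerSeriesGE_zero : (1 : R⟦X⟧) ∈ v.powerSeriesGE 0 := by
  simpa using C_mem_powerSeriesGE (v := v) 1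

theorem mul_mem_powerSeriesGE {a b : Γ₀} {f g : R⟦X⟧} (hf : f ∈ v.powerSeriesGE a)
    (hg : g ∈ v.powerSeriesGE b) : f * g ∈ v.powerSeriesGE (a + b) := by
  intro n
  rw [coeff_mul]
  refine v.map_le_sum fun ij _ => ?_
  rw [v.map_mul]
  exact add_le_add (hf _) (hg _)

theorem natCast_mem_powerSeriesGE_zero (n : ℕ) : (n : R⟦X⟧) ∈ v.powerSeriesGE 0 := by
  rw [← map_natCast C]
  refine powerSeriesGE_anti ?_ (C_mem_powerSeriesGE _)
  induction n with
  | zero => simp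
  | succ k ih => push_cast; exact v.map_le_add ih v.map_one.ge

theorem pow_mem_powerSeriesGE_zero {f : R⟦X⟧} (hf : f ∈ v.powerSeriesGE 0) (k : ℕ) :
    f ^ k ∈ v.powerSeriesGE 0 := by
  induction k with
  | zero => simpa using one_mem_powerSeriesGE_zero
  | succ k ih => simpa [pow_succ] using mul_mem_powerSeriesGE ih hf

theorem pow_mem_powerSeriesGE {γ : Γ₀} (hγ : 0 ≤ γ) {f : R⟦X⟧} (hf : f ∈ v.powerSeriesGE γ)
    {k : ℕ} (hk : k ≠ 0) : f ^ k ∈ v.powerSeriesGE γ := by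
  obtain ⟨k, rfl⟩ := Nat.exists_eq_succ_of_ne_zero hk
  simpa [pow_succ] using
    mul_mem_powerSeriesGE (pow_mem_powerSeriesGE_zero (powerSeriesGE_anti hγ hf) k) hf

/-- The binomial cross terms of `(f + g) ^ p` all carry the factor `p`. -/
theorem add_pow_sub_pow_sub_pow_mem_powerSeriesGE {p : ℕ} (hp : p.Prime)
    {δ : Γ₀} (hδ : 0 ≤ δ) {f g : R⟦X⟧} (hf : f ∈ v.powerSeriesGE 0)
    (hg : g ∈ v.powerSeriesGE δ) : (f + g) ^ p - f ^ p - g ^ p ∈ v.powerSeriesGE (v p + δ) := by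
  have hcross : (f + g) ^ p - f ^ p - g ^ p =
      C (p : R) * ∑ k ∈ Ioo 0 p, f ^ k * g ^ (p - k) * ((p.choose k / p : ℕ) : R⟦X⟧) := by
    rw [add_pow_prime_eq' hp, map_natCast]; ring
  rw [hcross]
  refine mul_mem_powerSeriesGE (C_mem_powerSeriesGE _) (AddSubgroup.sum_mem _ fun k hk => ?_)
  have hk := mem_Ioo.1 hk
  simpa using mul_mem_powerSeriesGE
    (mul_mem_powerSeriesGE (pow_mem_powerSeriesGE_zero hf k)
      (pow_mem_powerSeriesGE hδ hg (by omega)))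
    (natCast_mem_powerSeriesGE_zero _)

theorem sum_pow_sub_sum_pow_mem_powerSeriesGE {ι : Type*} {p : ℕ} (hp : p.Prime)
    {δ : Γ₀} (hδ : 0 ≤ δ) (s : Finset ι) {g : ι → R⟦X⟧}
    (hg : ∀ i ∈ s, g i ∈ v.powerSeriesGE δ) :
    (∑ i ∈ s, g i) ^ p - ∑ i ∈ s, g i ^ p ∈ v.powerSeriesGE (v p + δ) := by
  classical
  induction s using Finset.induction_on with
  | empty => simp [zero_pow hp.ne_zero]
  | @insert a s ha ih =>
    have hs := forall_mem_insert .. |>.1 hg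
    rw [sum_insert ha, sum_insert ha]
    have key := add_pow_sub_pow_sub_pow_mem_powerSeriesGE hp hδ
      (powerSeriesGE_anti hδ hs.1) (AddSubgroup.sum_mem _ hs.2)
    convert add_mem key (ih hs.2) using 1
    ring

end PowerSeriesGE

section WithTopReal

variable {K : Type*} [Field K] {v : AddValuation K (WithTop ℝ)}

theorem div_le_of_le_pow {p : ℕ} (hp : 0 < p) {z : K} {β : ℝ}
    (h : (β : WithTop ℝ) ≤ v (z ^ p)) :
    ((β / p : ℝ) : WithTop ℝ) ≤ v z := by
  rw [v.map_pow] at h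
  cases hz : v z with
  | top => exact le_top
  | coe x =>
    rw [hz, ← WithTop.coe_nsmul, WithTop.coe_le_coe, nsmul_eq_mul] at h
    rw [WithTop.coe_le_coe, div_le_iff₀ (by exact_mod_cast hp)]
    linarith

end WithTopReal

end AddValuation

open AddValuation

noncomputable def onePlusMonomials {R : Type*} [Semiring R] (b : ℕ → R) (s : ℕ) : R⟦X⟧ :=
  1 + ∑ j ∈ Icc 1 s, monomial j (b j)

theorem onePlusMonomials_mem_powerSeriesGE_zero {R Γ₀ : Type*} [CommRing R]
    [LinearOrderedAddCommMonoidWithTop Γ₀] {v : AddValuation R Γ₀} {b : ℕ → R} {s : ℕ}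
    (hb : ∀ i ∈ Icc 1 s, 0 ≤ v (b i)) :
    onePlusMonomials b s ∈ v.powerSeriesGE 0 :=
  add_mem one_mem_powerSeriesGE_zero
    (AddSubgroup.sum_mem _ fun j hj => monomial_mem_powerSeriesGE (hb j hj) j)

section Approximation

variable {K : Type*} [Field K] [IsAlgClosed K] {v : AddValuation K (WithTop ℝ)}
  {p : ℕ} (hp : p.Prime) (hvp : v p = 1)
include hp hvp

theorem exists_coeff_ge_one_add_div_of_coeff_ge (U : K⟦X⟧) (M : ℕ) {β : ℝ} (hβ : 0 ≤ β)
    {b : ℕ → K} (hb : ∀ i ∈ Icc 1 M, 0 ≤ v (b i))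
    (hc : ∀ m ∈ Icc 1 M, (β : WithTop ℝ) ≤ v (coeff (p * m) (U - onePlusMonomials b M ^ p))) :
    ∃ b' : ℕ → K, (∀ i ∈ Icc 1 M, 0 ≤ v (b' i)) ∧ ∀ m ∈ Icc 1 M,
      ((1 + β / p : ℝ) : WithTop ℝ) ≤ v (coeff (p * m) (U - onePlusMonomials b' M ^ p)) := by
  set H := onePlusMonomials b M
  choose d hd using fun m => IsAlgClosed.exists_pow_nat_eq (coeff (p * m) (U - H ^ p)) hp.pos
  have hβp : (0 : WithTop ℝ) ≤ ((β / p : ℝ) : WithTop ℝ) := by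
    exact_mod_cast div_nonneg hβ (Nat.cast_nonneg p)
  have hdβ : ∀ m ∈ Icc 1 M, ((β / p : ℝ) : WithTop ℝ) ≤ v (d m) :=
    fun m hm => div_le_of_le_pow hp.pos (hd m ▸ hc m hm)
  set D := ∑ m ∈ Icc 1 M, monomial m (d m)
  have hD : ∀ m ∈ Icc 1 M, monomial m (d m) ∈ v.powerSeriesGE ((β / p : ℝ) : WithTop ℝ) :=
    fun m hm => monomial_mem_powerSeriesGE (hdβ m hm) m
  refine ⟨b + d, fun i hi => v.map_le_add (hb i hi) (hβp.trans (hdβ i hi)), fun m hm => ?_⟩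
  have hsplit : U - onePlusMonomials (b + d) M ^ p =
      (U - H ^ p - ∑ j ∈ Icc 1 M, monomial (p * j) (d j ^ p))
        - ((H + D) ^ p - H ^ p - D ^ p) - (D ^ p - ∑ j ∈ Icc 1 M, monomial j (d j) ^ p) := by
    simp only [monomial_pow, onePlusMonomials, H, D, Pi.add_apply, _root_.map_add, sum_add_distrib]
    ring
  have hfrob : coeff (p * m) (U - H ^ p - ∑ j ∈ Icc 1 M, monomial (p * j) (d j ^ p)) = 0 := by
    simp [coeff_monomial, Nat.mul_left_cancel_iff hp.pos, hm, hd]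
  have hcross := add_mem
    (add_pow_sub_pow_sub_pow_mem_powerSeriesGE hp hβp
      (onePlusMonomials_mem_powerSeriesGE_zero hb) (AddSubgroup.sum_mem _ hD))
    (sum_pow_sub_sum_pow_mem_powerSeriesGE hp hβp _ hD)
  rw [hvp] at hcross
  rw [hsplit, sub_sub, _root_.map_sub, hfrob, zero_sub, v.map_neg]
  exact_mod_cast hcross (p * m)

theorem exists_coeff_ge_sub {U : K⟦X⟧} (hU : U ∈ v.powerSeriesGE 0) (M : ℕ) {ε : ℝ}
    (hε : 0 < ε) :
    ∃ b : ℕ → K, (∀ i ∈ Icc 1 M, 0 ≤ v (b i)) ∧ ∀ m ∈ Icc 1 M,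
      ((p / (p - 1) - ε : ℝ) : WithTop ℝ) ≤ v (coeff (p * m) (U - onePlusMonomials b M ^ p)) := by
  set L : ℝ := p / (p - 1)
  have hp1 : (1 : ℝ) < p := by exact_mod_cast hp.one_lt
  have hL : 0 < L := div_pos (by linarith) (by linarith)
  -- `L = p / (p - 1)` is the fixed point of `β ↦ 1 + β / p`
  have hiter : ∀ t : ℕ, ∃ b : ℕ → K, (∀ i ∈ Icc 1 M, 0 ≤ v (b i)) ∧ ∀ m ∈ Icc 1 M,
      ((L - L / p ^ t : ℝ) : WithTop ℝ) ≤ v (coeff (p * m) (U - onePlusMonomials b M ^ p)) := by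
    intro t
    induction t with
    | zero =>
      refine ⟨0, fun i _ => by simp, fun m _ => ?_⟩
      simpa [onePlusMonomials] using sub_mem hU one_mem_powerSeriesGE_zero (p * m)
    | succ t ih =>
      obtain ⟨b, hb, hc⟩ := ih
      have hβ : 0 ≤ L - L / p ^ t :=
        sub_nonneg.2 (div_le_self hL.le (one_le_pow₀ hp1.le))
      have hfix : 1 + (L - L / p ^ t) / p = L - L / p ^ (t + 1) := by
        have : (p : ℝ) - 1 ≠ 0 := by linarith
        simp only [L, pow_succ]; field_simp; ring
      simpa [hfix] using exists_coeff_ge_one_add_div_of_coeff_ge hp hvp U M hβ hb hc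
  obtain ⟨t, ht⟩ := pow_unbounded_of_one_lt (L / ε) hp1
  obtain ⟨b, hb, hc⟩ := hiter t
  refine ⟨b, hb, fun m hm => le_trans ?_ (hc m hm)⟩
  have : L / p ^ t < ε := by rw [div_lt_iff₀ (by positivity)] at ht ⊢; linarith
  exact WithTop.coe_le_coe.2 (by linarith)

end Approximation

theorem WithTop.coe_le_add_coe_of_coe_sub_le {a b : ℝ} {x : WithTop ℝ}
    (h : ((a - b : ℝ) : WithTop ℝ) ≤ x) : (a : WithTop ℝ) ≤ x + b := by
  cases x with
  | top => simp
  | coe x => norm_cast at h ⊢; linarith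

theorem stmt5_general (p : ℕ) (hp : p.Prime)
    (C : Type) [Field C] [IsAlgClosed C]
    (v : AddValuation C (WithTop ℝ)) (hvp : v (p : C) = 1)
    (U : PowerSeries C)
    (hUR : ∀ i : ℕ, (0 : WithTop ℝ) ≤ v (PowerSeries.coeff i U))
    (r : ℝ) (hr : 0 < r) :
    ∃ s : ℕ, ∃ b : ℕ → C, (∀ i ∈ Finset.Icc 1 s, (0 : WithTop ℝ) ≤ v (b i)) ∧
      ∀ n : ℕ, 1 ≤ n → p ∣ n →
        (((p : ℝ) / ((p : ℝ) - 1) : ℝ) : WithTop ℝ) ≤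
          v (PowerSeries.coeff n
              (U - (1 + ∑ j ∈ Finset.Icc 1 s, PowerSeries.monomial j (b j)) ^ p)) +
            (((n : ℝ) * r : ℝ) : WithTop ℝ) := by
  set L : ℝ := p / (p - 1)
  have hpr : 0 < (p : ℝ) * r := mul_pos (by exact_mod_cast hp.pos) hr
  set M := ⌈L / (p * r)⌉₊
  have hU : U ∈ v.powerSeriesGE 0 := hUR
  obtain ⟨b, hb, hc⟩ := exists_coeff_ge_sub hp hvp hU M hpr
  refine ⟨M, b, hb, fun n hn ⟨m, hnm⟩ => WithTop.coe_le_add_coe_of_coe_sub_le ?_⟩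
  subst hnm
  have hm : 1 ≤ m := Nat.pos_of_ne_zero (by rintro rfl; simp at hn)
  have hmr : (p : ℝ) * r ≤ (p * m : ℕ) * r := by
    push_cast; nlinarith [(by exact_mod_cast hm : (1 : ℝ) ≤ m)]
  rcases le_or_gt m M with hmM | hMm
  · exact le_trans (WithTop.coe_le_coe.2 (by linarith)) (hc m (mem_Icc.2 ⟨hm, hmM⟩))
  · have hLM : L ≤ (p * m : ℕ) * r := by
      have := (div_le_iff₀ hpr).1 ((Nat.le_ceil _).trans (Nat.cast_le.2 hMm.le))
      push_cast; nlinarith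
    exact le_trans (WithTop.coe_le_coe.2 (by linarith : L - (p * m : ℕ) * r ≤ 0))
      (sub_mem hU (pow_mem_powerSeriesGE_zero (onePlusMonomials_mem_powerSeriesGE_zero hb) p) _)

/-- Let `U = 1 + Σ_{i ≥ 1} a_i T^i ∈ C[[T]]` have all coefficients in the valuation ring
`R = {x : C | 0 ≤ v x}`, and let `r > 0` be a real number.  Then there exists a polynomial
`H = 1 + Σ_{i=1}^s b_i T^i` with all `b_i ∈ R` such that for every index `n ≥ 1` divisible by
`p`, the `n`-th coefficient `c_n` of `U - H^p` satisfies `v (c_n) + n * r ≥ p / (p - 1)`. -/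
theorem stmt5 (p : ℕ) (hp : p.Prime)
    (C : Type) [Field C] [IsAlgClosed C] [CharZero C]
    (v : AddValuation C (WithTop ℝ)) (hvp : v (p : C) = 1)
    (U : PowerSeries C) (hU0 : PowerSeries.coeff 0 U = 1)
    (hUR : ∀ i : ℕ, (0 : WithTop ℝ) ≤ v (PowerSeries.coeff i U))
    (r : ℝ) (hr : 0 < r) :
    ∃ s : ℕ, ∃ b : ℕ → C, (∀ i ∈ Finset.Icc 1 s, (0 : WithTop ℝ) ≤ v (b i)) ∧
      ∀ n : ℕ, 1 ≤ n → p ∣ n →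
        (((p : ℝ) / ((p : ℝ) - 1) : ℝ) : WithTop ℝ) ≤
          v (PowerSeries.coeff n
              (U - (1 + ∑ j ∈ Finset.Icc 1 s, PowerSeries.monomial j (b j)) ^ p)) +
            (((n : ℝ) * r : ℝ) : WithTop ℝ) :=
  stmt5_general p hp C v hvp U hUR r hr
end

section
/- Let r ≥ 0 be a real number. Let H = Σ_{i≥0} h_i T^i ∈ C[[T]] satisfy v(h_i) + i·r ≥ 0 for all i ≥ 0, and let f = Σ_{i≥1} f_i T^i ∈ T·C[[T]] be such that β := v_r(f) satisfies 0 ≤ β < ∞. Then v_r( (H+f)^p − H^p − Σ_{i≥1} f_i^p T^{ip} ) ≥ 1 + β. -/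
/-!
For a prime `p` one has `(x + y)^p = x^p + y^p + p x y S` with `S` an integral polynomial in
`x, y`. Since `v_r (x y) ≥ v_r x + v_r y` and `v p = 1`, this gives
`v_r ((x + y)^p - x^p - y^p) ≥ 1 + v_r x + v_r y` whenever `v_r x, v_r y ≥ 0`.
The `n`-th coefficient in question only sees the truncation `g = Σ_{i ≤ n} f_i T^i` of `f`: it is
that of `((H + g)^p - H^p - g^p) + (g^p - Σ_{i ≤ n} (f_i T^i)^p)`, and both summands are bounded
by the binomial estimate, the second one by induction on the number of monomials.
-/

open Finset

lemma WithTop.coe_le_add_coe_iff (a c : ℝ) (x : WithTop ℝ) :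
    (a : WithTop ℝ) ≤ x + (c : WithTop ℝ) ↔ ((a - c : ℝ) : WithTop ℝ) ≤ x := by
  induction x using WithTop.recTopCoe with
  | top => simp
  | coe b => norm_cast; constructor <;> intro h <;> linarith

namespace PowerSeries

section GaussValuation

variable {R : Type*} [CommRing R] (v : AddValuation R (WithTop ℝ)) (r : ℝ)

/-- `α ≤ v_r g`, where `v_r g = inf_m (v (coeff m g) + m r)` is the Gauss valuation. -/
def GaussValGE (α : ℝ) (g : R⟦X⟧) : Prop :=
  ∀ m : ℕ, ((α - m * r : ℝ) : WithTop ℝ) ≤ v (coeff m g)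

variable {v r}

lemma gaussValGE_iff {α : ℝ} {g : R⟦X⟧} :
    GaussValGE v r α g ↔ ∀ m : ℕ, (α : WithTop ℝ) ≤ v (coeff m g) + ((m * r : ℝ) : WithTop ℝ) := by
  simp only [GaussValGE, WithTop.coe_le_add_coe_iff]

lemma GaussValGE.mono {α α' : ℝ} {g : R⟦X⟧} (hg : GaussValGE v r α g) (h : α' ≤ α) :
    GaussValGE v r α' g :=
  fun m => le_trans (WithTop.coe_le_coe.2 (by linarith)) (hg m)

lemma gaussValGE_zero (α : ℝ) : GaussValGE v r α (0 : R⟦X⟧) := by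
  simp [GaussValGE]

lemma gaussValGE_monomial {α : ℝ} (n : ℕ) {c : R} (h : ((α - n * r : ℝ) : WithTop ℝ) ≤ v c) :
    GaussValGE v r α (monomial n c) := by
  intro m
  rw [coeff_monomial]
  split_ifs with hmn
  · exact hmn ▸ h
  · simp

lemma gaussValGE_C {α : ℝ} {c : R} (h : (α : WithTop ℝ) ≤ v c) : GaussValGE v r α (C c) := by
  rw [← monomial_zero_eq_C_apply]
  exact gaussValGE_monomial 0 (by simpa using h)

lemma gaussValGE_one : GaussValGE v r 0 (1 : R⟦X⟧) :=
  map_one (C (R := R)) ▸ gaussValGE_C (by simp)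

lemma GaussValGE.add {α : ℝ} {g h : R⟦X⟧} (hg : GaussValGE v r α g) (hh : GaussValGE v r α h) :
    GaussValGE v r α (g + h) :=
  fun m => map_add (coeff m) g h ▸ v.map_le_add (hg m) (hh m)

lemma gaussValGE_sum {α : ℝ} {ι : Type*} {s : Finset ι} {g : ι → R⟦X⟧}
    (hg : ∀ i ∈ s, GaussValGE v r α (g i)) : GaussValGE v r α (∑ i ∈ s, g i) :=
  fun m => map_sum (coeff m) g s ▸ v.map_le_sum fun i hi => hg i hi m

lemma GaussValGE.mul {α β : ℝ} {g h : R⟦X⟧} (hg : GaussValGE v r α g) (hh : GaussValGE v r β h) :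
    GaussValGE v r (α + β) (g * h) := by
  intro m
  rw [coeff_mul]
  refine v.map_le_sum fun ij hij => ?_
  rw [v.map_mul]
  have hm : (m : ℝ) = ij.1 + ij.2 := by exact_mod_cast (mem_antidiagonal.mp hij).symm
  calc ((α + β - m * r : ℝ) : WithTop ℝ)
      = ((α - ij.1 * r : ℝ) : WithTop ℝ) + ((β - ij.2 * r : ℝ) : WithTop ℝ) := by
        norm_cast; rw [hm]; ring
    _ ≤ v (coeff ij.1 g) + v (coeff ij.2 h) := add_le_add (hg ij.1) (hh ij.2)

lemma GaussValGE.pow {α : ℝ} {g : R⟦X⟧} (hg : GaussValGE v r α g) (k : ℕ) :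
    GaussValGE v r (k * α) (g ^ k) := by
  induction k with
  | zero => simpa using gaussValGE_one
  | succ k ih => exact (ih.mul hg).mono (by push_cast; linarith)

lemma gaussValGE_natCast (n : ℕ) : GaussValGE v r 0 (n : R⟦X⟧) := by
  induction n with
  | zero => simpa using gaussValGE_zero (R := R) 0
  | succ n ih => simpa using ih.add gaussValGE_one

variable {p : ℕ} (hp : p.Prime) (hvp : v p = 1)
include hp hvp

lemma GaussValGE.add_pow_prime_sub {α β : ℝ} (hα : 0 ≤ α) (hβ : 0 ≤ β) {x y : R⟦X⟧}
    (hx : GaussValGE v r α x) (hy : GaussValGE v r β y) :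
    GaussValGE v r (1 + α + β) ((x + y) ^ p - x ^ p - y ^ p) := by
  have hS : GaussValGE v r 0
      (∑ k ∈ Ioo 0 p, x ^ (k - 1) * y ^ (p - k - 1) * ((p.choose k / p : ℕ) : R⟦X⟧)) :=
    gaussValGE_sum fun k _ =>
      (((hx.pow _).mul (hy.pow _)).mul (gaussValGE_natCast _)).mono (by positivity)
  have hpv : GaussValGE v r 1 (p : R⟦X⟧) :=
    map_natCast (C (R := R)) p ▸ gaussValGE_C (by simp [hvp])
  convert ((hpv.mul hx).mul hy).mul hS using 1
  · ring
  · rw [add_pow_prime_eq hp]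
    ring

lemma gaussValGE_sum_pow_sub_sum_pow {β : ℝ} (hβ : 0 ≤ β) {ι : Type*} [DecidableEq ι]
    {s : Finset ι} {x : ι → R⟦X⟧} (hx : ∀ i ∈ s, GaussValGE v r β (x i)) :
    GaussValGE v r (1 + β) ((∑ i ∈ s, x i) ^ p - ∑ i ∈ s, x i ^ p) := by
  induction s using Finset.induction_on with
  | empty => simpa [zero_pow hp.ne_zero] using gaussValGE_zero (1 + β)
  | insert a s ha ih =>
    rw [sum_insert ha, sum_insert ha]
    have hxs : ∀ i ∈ s, GaussValGE v r β (x i) := fun i hi => hx i (mem_insert_of_mem hi)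
    have hbinom := (hx a (mem_insert_self a s)).add_pow_prime_sub hp hvp hβ hβ
      (gaussValGE_sum hxs)
    convert (hbinom.mono (by linarith)).add (ih hxs) using 1
    ring

end GaussValuation

section Truncation

variable {R : Type*}

lemma coeff_eq_of_X_pow_dvd_sub [Ring R] {a b : R⟦X⟧} {n : ℕ} (h : X ^ (n + 1) ∣ a - b) :
    coeff n a = coeff n b := by
  rw [← sub_eq_zero, ← map_sub]
  exact X_pow_dvd_iff.mp h n n.lt_succ_self

lemma X_pow_dvd_sub_sum_range_monomial [Ring R] (f : R⟦X⟧) (n : ℕ) :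
    X ^ n ∣ f - ∑ i ∈ range n, monomial i (coeff i f) := by
  refine X_pow_dvd_iff.mpr fun m hm => ?_
  simp [coeff_monomial, hm]

lemma coeff_sum_range_monomial_pow [CommSemiring R] {p : ℕ} (hp : 0 < p) (a : ℕ → R) (n : ℕ) :
    coeff n (∑ i ∈ range (n + 1), monomial i (a i) ^ p) = if p ∣ n then a (n / p) ^ p else 0 := by
  simp only [monomial_pow, map_sum, coeff_monomial]
  split_ifs with hdvd
  · obtain ⟨q, rfl⟩ := hdvd
    rw [sum_eq_single q]
    · simp [hp]
    · exact fun i _ hiq => if_neg fun h => hiq (Nat.eq_of_mul_eq_mul_left hp h).symm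
    · exact fun hq => absurd (mem_range_succ_iff.2 (Nat.le_mul_of_pos_left q hp)) hq
  · exact sum_eq_zero fun i _ => if_neg fun h => hdvd ⟨i, h⟩

end Truncation

end PowerSeries

open PowerSeries in
theorem stmt6_general (p : ℕ) (hp : p.Prime)
    (C : Type) [Field C]
    (v : AddValuation C (WithTop ℝ)) (hvp : v (p : C) = 1)
    (r : ℝ)
    (H : PowerSeries C)
    (hH : ∀ i : ℕ, (0 : WithTop ℝ) ≤ v (PowerSeries.coeff i H) + (((i : ℝ) * r : ℝ) : WithTop ℝ))
    (f : PowerSeries C) (hf0 : PowerSeries.coeff 0 f = 0)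
    (β : ℝ) (hβ0 : 0 ≤ β)
    (hβlb : ∀ i : ℕ, ((β : ℝ) : WithTop ℝ) ≤
      v (PowerSeries.coeff i f) + (((i : ℝ) * r : ℝ) : WithTop ℝ)) :
    ∀ n : ℕ,
      ((1 + β : ℝ) : WithTop ℝ) ≤
        v (PowerSeries.coeff n ((H + f) ^ p - H ^ p) -
            (if p ∣ n ∧ 0 < n then (PowerSeries.coeff (n / p) f) ^ p else 0)) +
          (((n : ℝ) * r : ℝ) : WithTop ℝ) := by
  intro n
  set g := ∑ i ∈ range (n + 1), monomial i (coeff i f)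
  have hHv : GaussValGE v r 0 H := gaussValGE_iff.2 (by simpa using hH)
  have hfv : GaussValGE v r β f := gaussValGE_iff.2 hβlb
  have hmon : ∀ i ∈ range (n + 1), GaussValGE v r β (monomial i (coeff i f)) :=
    fun i _ => gaussValGE_monomial i (hfv i)
  have hfrob : coeff n (∑ i ∈ range (n + 1), monomial i (coeff i f) ^ p) =
      if p ∣ n ∧ 0 < n then coeff (n / p) f ^ p else 0 := by
    rw [coeff_sum_range_monomial_pow hp.pos]
    rcases n.eq_zero_or_pos with rfl | hn
    · simp [hf0, hp.ne_zero]
    · simp [hn]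
  have htrunc : coeff n ((H + f) ^ p) = coeff n ((H + g) ^ p) :=
    coeff_eq_of_X_pow_dvd_sub <| (add_sub_add_left_eq_sub f g H ▸
      X_pow_dvd_sub_sum_range_monomial f (n + 1)).trans (sub_dvd_pow_sub_pow _ _ p)
  have hbound := ((hHv.add_pow_prime_sub hp hvp le_rfl hβ0 (gaussValGE_sum hmon)).mono
    (by linarith)).add (gaussValGE_sum_pow_sub_sum_pow hp hvp hβ0 hmon)
  convert gaussValGE_iff.1 hbound n using 3
  rw [map_sub, htrunc, ← hfrob]
  simp only [map_add, map_sub]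
  ring

/-- Let `r ≥ 0`.  Let `H = Σ_{i ≥ 0} h_i T^i ∈ C[[T]]` satisfy `v (h_i) + i * r ≥ 0` for all
`i`, and let `f = Σ_{i ≥ 1} f_i T^i ∈ T·C[[T]]` be such that `β := v_r (f)` (the Gauss valuation
`inf_i (v (f_i) + i * r)`, expressed below as a lower bound together with an approximation
property) satisfies `0 ≤ β < ∞`.  Then
`v_r ((H + f)^p - H^p - Σ_{i ≥ 1} f_i^p T^(i*p)) ≥ 1 + β`, i.e. every coefficient `c_n` of
the latter series satisfies `v (c_n) + n * r ≥ 1 + β`. -/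
theorem stmt6 (p : ℕ) (hp : p.Prime)
    (C : Type) [Field C] [IsAlgClosed C] [CharZero C]
    (v : AddValuation C (WithTop ℝ)) (hvp : v (p : C) = 1)
    (r : ℝ) (hr : 0 ≤ r)
    (H : PowerSeries C)
    (hH : ∀ i : ℕ, (0 : WithTop ℝ) ≤ v (PowerSeries.coeff i H) + (((i : ℝ) * r : ℝ) : WithTop ℝ))
    (f : PowerSeries C) (hf0 : PowerSeries.coeff 0 f = 0)
    (β : ℝ) (hβ0 : 0 ≤ β)
    (hβlb : ∀ i : ℕ, ((β : ℝ) : WithTop ℝ) ≤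
      v (PowerSeries.coeff i f) + (((i : ℝ) * r : ℝ) : WithTop ℝ))
    (hβglb : ∀ ε : ℝ, 0 < ε → ∃ i : ℕ,
      v (PowerSeries.coeff i f) + (((i : ℝ) * r : ℝ) : WithTop ℝ) < ((β + ε : ℝ) : WithTop ℝ)) :
    ∀ n : ℕ,
      ((1 + β : ℝ) : WithTop ℝ) ≤
        v (PowerSeries.coeff n ((H + f) ^ p - H ^ p) -
            (if p ∣ n ∧ 0 < n then (PowerSeries.coeff (n / p) f) ^ p else 0)) +
          (((n : ℝ) * r : ℝ) : WithTop ℝ) :=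
  stmt6_general p hp C v hvp r H hH f hf0 β hβ0 hβlb
end

section
/- Let r ≥ 0 be a real number. Let H = Σ_{i≥0} h_i T^i ∈ C[[T]] satisfy v(h_i) + i·r ≥ 0 for all i ≥ 0, and let f = Σ_{i≥1} f_i T^i ∈ T·C[[T]] be such that β := v_r(f) satisfies 0 ≤ β < 1/(p−1). Then v_r((H+f)^p − H^p) = p·β, and for every index n ≥ 1 not divisible by p, the n-th coefficient c_n of (H+f)^p − H^p satisfies v(c_n) + n·r ≥ 1 + β > p·β. In particular, the Gauss valuation p·β of (H+f)^p − H^p can only be attained by coefficients whose degree is divisible by p. -/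
/-!
Write `(H + f)^p - H^p = f^p + p S` with `S = Σ_{0<k<p} (p.choose k / p) H^k f^(p-k)`; then
`v_r (p S) ≥ 1 + β > p β`, so everything is governed by `f^p`. The Gauss valuation is
multiplicative: after enlarging `r` slightly to `r + η` the infimum defining `v_{r+η} f` is
attained, and if `i₀` is the least index attaining it, the coefficient of `T^(p i₀)` in `f^p` has
a single dominant term. For `p ∤ n`, differentiating gives `n c_n(f^p) = p [T^(n-1)] (f^(p-1) f')`
and `v n = 0`, which produces the extra `1`.
-/

open PowerSeries Finset

namespace AddValuation

variable {R Γ₀ : Type*} [Ring R] [LinearOrderedAddCommMonoidWithTop Γ₀] (v : AddValuation R Γ₀)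

theorem map_natCast_nonneg (n : ℕ) : 0 ≤ v (n : R) := by
  induction n with
  | zero => simp
  | succ n ih => simpa using v.map_le_add ih v.map_one.ge

theorem map_natCast_eq_zero_of_coprime {p n : ℕ} (hp : 1 < p) (hvp : 0 < v (p : R))
    (hn : n.Coprime p) : v (n : R) = 0 := by
  obtain ⟨m, -, hm⟩ := Nat.exists_mul_mod_eq_one_of_coprime hn hp
  have hnm : ((n * m : ℕ) : R) = p * ((n * m / p : ℕ) : R) + 1 := by
    have h := Nat.div_add_mod (n * m) p
    rw [hm] at h
    exact_mod_cast congrArg (Nat.cast : ℕ → R) h.symm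
  have hlt : v (1 : R) < v (p * ((n * m / p : ℕ) : R)) := by
    rw [v.map_one, v.map_mul]
    exact hvp.trans_le (le_add_of_nonneg_right (v.map_natCast_nonneg _))
  have hval : v ((n * m : ℕ) : R) = 0 := by
    rw [hnm, v.map_add_eq_of_lt_right hlt, v.map_one]
  refine le_antisymm ?_ (v.map_natCast_nonneg n)
  calc v (n : R) ≤ v (n : R) + v (m : R) := le_add_of_nonneg_right (v.map_natCast_nonneg m)
    _ = 0 := by rw [← v.map_mul, ← Nat.cast_mul, hval]

theorem le_map_sum_add {ι : Type*} {s : Finset ι} {F : ι → R} {c w : Γ₀}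
    (h : ∀ i ∈ s, c ≤ v (F i) + w) : c ≤ v (∑ i ∈ s, F i) + w := by
  refine Finset.sum_induction F (fun y => c ≤ v y + w) (fun a b ha hb => ?_) (by simp) h
  calc c ≤ min (v a) (v b) + w := by rw [← min_add_add_right]; exact le_min ha hb
    _ ≤ v (a + b) + w := by gcongr; exact v.map_add a b

theorem lt_map_sum_add {ι : Type*} {s : Finset ι} {F : ι → R} {c w : Γ₀} (hc : c < ⊤)
    (h : ∀ i ∈ s, c < v (F i) + w) : c < v (∑ i ∈ s, F i) + w := by
  refine Finset.sum_induction F (fun y => c < v y + w) (fun a b ha hb => ?_) (by simpa) h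
  calc c < min (v a) (v b) + w := by rw [← min_add_add_right]; exact lt_min ha hb
    _ ≤ v (a + b) + w := by gcongr; exact v.map_add a b

end AddValuation

theorem exists_least_minimizer {α : Type*} [LinearOrder α] (w : ℕ → α) {i₁ N : ℕ}
    (h : ∀ i, N ≤ i → w i₁ < w i) : ∃ i₀, (∀ i, w i₀ ≤ w i) ∧ ∀ i < i₀, w i₀ < w i := by
  classical
  obtain ⟨j, -, hj⟩ := (range (max N (i₁ + 1))).exists_min_image w ⟨i₁, by simp⟩
  have hex : ∃ i, ∀ k, w i ≤ w k := ⟨j, fun k => by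
    by_cases hk : k < max N (i₁ + 1)
    · exact hj k (mem_range.2 hk)
    · exact (hj i₁ (by simp)).trans (h k (by omega)).le⟩
  exact ⟨Nat.find hex, Nat.find_spec hex, fun i hi => (Nat.find_spec hex i).lt_of_ne
    fun heq => Nat.find_min hex hi fun k => heq ▸ Nat.find_spec hex k⟩

noncomputable section GaussValuation

variable {R : Type*} [CommRing R]

/-- The `i`-th term `v (g_i) + i r` of the infimum defining the Gauss valuation `v_r g`. -/
def weightedVal (v : AddValuation R (WithTop ℝ)) (r : ℝ) (g : R⟦X⟧) (i : ℕ) : WithTop ℝ :=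
  v (coeff i g) + ((i * r : ℝ) : WithTop ℝ)

def LeGaussVal (v : AddValuation R (WithTop ℝ)) (r : ℝ) (a : ℝ) (g : R⟦X⟧) : Prop :=
  ∀ i, (a : WithTop ℝ) ≤ weightedVal v r g i

structure IsGaussDominantIndex (v : AddValuation R (WithTop ℝ)) (r : ℝ) (g : R⟦X⟧) (μ : ℝ)
    (i₀ : ℕ) : Prop where
  le : LeGaussVal v r μ g
  eq : weightedVal v r g i₀ = μ
  lt : ∀ i < i₀, (μ : WithTop ℝ) < weightedVal v r g i

variable {v : AddValuation R (WithTop ℝ)} {r : ℝ}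

theorem weightedVal_mono {r' : ℝ} (hr : r ≤ r') (g : R⟦X⟧) (i : ℕ) :
    weightedVal v r g i ≤ weightedVal v r' g i :=
  add_le_add_right (WithTop.coe_le_coe.2 (mul_le_mul_of_nonneg_left hr i.cast_nonneg)) _

theorem min_weightedVal_le_weightedVal_add (g h : R⟦X⟧) (i : ℕ) :
    min (weightedVal v r g i) (weightedVal v r h i) ≤ weightedVal v r (g + h) i := by
  unfold weightedVal
  rw [min_add_add_right, map_add]
  gcongr
  exact v.map_add _ _

theorem weightedVal_add_eq_of_lt {g h : R⟦X⟧} {i : ℕ}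
    (hgh : weightedVal v r g i < weightedVal v r h i) :
    weightedVal v r (g + h) i = weightedVal v r g i := by
  unfold weightedVal at hgh ⊢
  rw [map_add, v.map_add_eq_of_lt_left
    ((WithTop.add_lt_add_iff_right WithTop.coe_ne_top).1 hgh)]

theorem map_coeff_mul_coeff_add_weight (g h : R⟦X⟧) {n : ℕ} {x : ℕ × ℕ}
    (hx : x ∈ antidiagonal n) :
    v (coeff x.1 g * coeff x.2 h) + ((n * r : ℝ) : WithTop ℝ) =
      weightedVal v r g x.1 + weightedVal v r h x.2 := by
  rw [HasAntidiagonal.mem_antidiagonal] at hx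
  rw [← hx, v.map_mul, Nat.cast_add, add_mul, WithTop.coe_add, add_add_add_comm]
  rfl

theorem le_weightedVal_mul {g h : R⟦X⟧} {n : ℕ} {c : WithTop ℝ}
    (hc : ∀ x ∈ antidiagonal n, c ≤ weightedVal v r g x.1 + weightedVal v r h x.2) :
    c ≤ weightedVal v r (g * h) n := by
  rw [weightedVal, coeff_mul]
  exact v.le_map_sum_add fun x hx => map_coeff_mul_coeff_add_weight g h hx ▸ hc x hx

theorem lt_weightedVal_mul {g h : R⟦X⟧} {n : ℕ} {c : ℝ}
    (hc : ∀ x ∈ antidiagonal n, (c : WithTop ℝ) < weightedVal v r g x.1 + weightedVal v r h x.2) :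
    c < weightedVal v r (g * h) n := by
  rw [weightedVal, coeff_mul]
  exact v.lt_map_sum_add (WithTop.coe_lt_top c)
    fun x hx => map_coeff_mul_coeff_add_weight g h hx ▸ hc x hx

namespace LeGaussVal

variable {a b : ℝ} {g h : R⟦X⟧}

theorem mono (hab : a ≤ b) (hg : LeGaussVal v r b g) : LeGaussVal v r a g :=
  fun i => (WithTop.coe_le_coe.2 hab).trans (hg i)

theorem add (hg : LeGaussVal v r a g) (hh : LeGaussVal v r a h) : LeGaussVal v r a (g + h) :=
  fun i => (le_min (hg i) (hh i)).trans (min_weightedVal_le_weightedVal_add g h i)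

theorem mul (hg : LeGaussVal v r a g) (hh : LeGaussVal v r b h) :
    LeGaussVal v r (a + b) (g * h) :=
  fun _ => le_weightedVal_mul fun x _ => WithTop.coe_add a b ▸ add_le_add (hg x.1) (hh x.2)

end LeGaussVal

theorem leGaussVal_zero (a : ℝ) : LeGaussVal v r a 0 := fun i => by simp [weightedVal]

theorem leGaussVal_C {a : ℝ} {c : R} (hc : (a : WithTop ℝ) ≤ v c) : LeGaussVal v r a (C c) := by
  intro i
  rcases eq_or_ne i 0 with rfl | hi
  · simpa [weightedVal] using hc
  · simp [weightedVal, coeff_C, hi]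

theorem leGaussVal_natCast {a : ℝ} {n : ℕ} (hn : (a : WithTop ℝ) ≤ v (n : R)) :
    LeGaussVal v r a (n : R⟦X⟧) :=
  map_natCast (C (R := R)) n ▸ leGaussVal_C hn

theorem LeGaussVal.sum {ι : Type*} {s : Finset ι} {a : ℝ} {F : ι → R⟦X⟧}
    (hF : ∀ i ∈ s, LeGaussVal v r a (F i)) : LeGaussVal v r a (∑ i ∈ s, F i) :=
  Finset.sum_induction F _ (fun _ _ => LeGaussVal.add) (leGaussVal_zero a) hF

theorem leGaussVal_one : LeGaussVal v r 0 (1 : R⟦X⟧) := by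
  simpa using leGaussVal_natCast (v := v) (r := r) (n := 1) (by simp)

theorem LeGaussVal.pow {a : ℝ} {g : R⟦X⟧} (hg : LeGaussVal v r a g) (k : ℕ) :
    LeGaussVal v r (k * a) (g ^ k) := by
  induction k with
  | zero => simpa using leGaussVal_one
  | succ k ih => simpa [add_mul, pow_succ] using ih.mul hg

theorem LeGaussVal.derivative {a : ℝ} {g : R⟦X⟧} (hg : LeGaussVal v r a g) :
    LeGaussVal v r (a - r) (d⁄dX R g) := by
  intro i
  have hgi := hg (i + 1)
  have hi : 0 ≤ v ((i : R) + 1) := by simpa using v.map_natCast_nonneg (i + 1)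
  unfold weightedVal at hgi ⊢
  rw [coeff_derivative, v.map_mul, ← WithTop.add_le_add_iff_right (WithTop.coe_ne_top (a := r)),
    ← WithTop.coe_add, sub_add_cancel]
  calc (a : WithTop ℝ) ≤ v (coeff (i + 1) g) + ((((i + 1 : ℕ) : ℝ) * r : ℝ) : WithTop ℝ) := hgi
    _ = v (coeff (i + 1) g) + ((i * r : ℝ) : WithTop ℝ) + (r : WithTop ℝ) := by
      rw [Nat.cast_succ, add_one_mul, WithTop.coe_add, add_assoc]
    _ ≤ v (coeff (i + 1) g) + v ((i : R) + 1) + ((i * r : ℝ) : WithTop ℝ) + (r : WithTop ℝ) := by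
      gcongr
      exact le_add_of_nonneg_right hi

theorem LeGaussVal.le_weightedVal_pow {a : ℝ} {g : R⟦X⟧} (hg : LeGaussVal v r a g) {k n : ℕ}
    (hk : 0 < k) (hn : v (n : R) = 0) :
    ((k * a : ℝ) : WithTop ℝ) + v (k : R) ≤ weightedVal v r (g ^ k) n := by
  obtain ⟨m, rfl⟩ : ∃ m, n = m + 1 := Nat.exists_eq_succ_of_ne_zero (by rintro rfl; simp at hn)
  have hcoeff : coeff (m + 1) (g ^ k) * ((m + 1 : ℕ) : R) =
      (k : R) * coeff m (g ^ (k - 1) * d⁄dX R g) := by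
    have h := congrArg (coeff m) (derivative_pow g k)
    rwa [coeff_derivative, mul_assoc, ← map_natCast (C (R := R)), coeff_C_mul, ← Nat.cast_succ] at h
  have hv : v (coeff (m + 1) (g ^ k)) = v (k : R) + v (coeff m (g ^ (k - 1) * d⁄dX R g)) := by
    rw [← v.map_mul, ← hcoeff, v.map_mul, hn, add_zero]
  calc ((k * a : ℝ) : WithTop ℝ) + v (k : R)
      = v (k : R) + ((((k - 1 : ℕ) * a + (a - r) : ℝ) : WithTop ℝ) + (r : WithTop ℝ)) := by
        rw [← WithTop.coe_add, add_comm, Nat.cast_sub hk]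
        congr 2
        push_cast
        ring
    _ ≤ v (k : R) + (weightedVal v r (g ^ (k - 1) * d⁄dX R g) m + (r : WithTop ℝ)) := by
        gcongr
        exact (hg.pow (k - 1)).mul hg.derivative m
    _ = weightedVal v r (g ^ k) (m + 1) := by
        rw [weightedVal, weightedVal, hv, Nat.cast_succ, add_one_mul, WithTop.coe_add]
        ac_rfl

namespace IsGaussDominantIndex

variable {g h : R⟦X⟧} {μ ν : ℝ} {i j : ℕ}

theorem lt_weightedVal_add_weightedVal (hg : IsGaussDominantIndex v r g μ i)
    (hh : IsGaussDominantIndex v r h ν j) {x : ℕ × ℕ} (hx : x.1 < i ∨ x.2 < j) :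
    ((μ + ν : ℝ) : WithTop ℝ) < weightedVal v r g x.1 + weightedVal v r h x.2 := by
  rw [WithTop.coe_add]
  rcases hx with hx | hx
  · exact WithTop.add_lt_add_of_lt_of_le WithTop.coe_ne_top (hg.lt _ hx) (hh.le _)
  · exact WithTop.add_lt_add_of_le_of_lt WithTop.coe_ne_top (hg.le _) (hh.lt _ hx)

theorem mul (hg : IsGaussDominantIndex v r g μ i) (hh : IsGaussDominantIndex v r h ν j) :
    IsGaussDominantIndex v r (g * h) (μ + ν) (i + j) where
  le := hg.le.mul hh.le
  lt n hn := lt_weightedVal_mul fun x hx => hg.lt_weightedVal_add_weightedVal hh <| by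
    rw [HasAntidiagonal.mem_antidiagonal] at hx
    omega
  eq := by
    have hij : (i, j) ∈ antidiagonal (i + j) := HasAntidiagonal.mem_antidiagonal.2 rfl
    have hmain : v (coeff i g * coeff j h) + (((i + j : ℕ) * r : ℝ) : WithTop ℝ) = ↑(μ + ν) := by
      rw [map_coeff_mul_coeff_add_weight g h hij, hg.eq, hh.eq, WithTop.coe_add]
    have hrest : ((μ + ν : ℝ) : WithTop ℝ) < v (∑ x ∈ (antidiagonal (i + j)).erase (i, j),
        coeff x.1 g * coeff x.2 h) + (((i + j : ℕ) * r : ℝ) : WithTop ℝ) := by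
      refine v.lt_map_sum_add (WithTop.coe_lt_top _) fun x hx => ?_
      obtain ⟨hne, hx⟩ := mem_erase.1 hx
      rw [map_coeff_mul_coeff_add_weight g h hx]
      rw [HasAntidiagonal.mem_antidiagonal] at hx
      refine hg.lt_weightedVal_add_weightedVal hh ?_
      by_contra! hc
      exact hne (Prod.ext (by omega) (by omega))
    rw [← hmain] at hrest
    rw [weightedVal, coeff_mul, ← add_sum_erase _ _ hij, v.map_add_eq_of_lt_left
      ((WithTop.add_lt_add_iff_right WithTop.coe_ne_top).1 hrest), hmain]

theorem one : IsGaussDominantIndex v r 1 0 0 where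
  le := leGaussVal_one
  eq := by simp [weightedVal]
  lt _ h := absurd h (Nat.not_lt_zero _)

theorem pow (hg : IsGaussDominantIndex v r g μ i) (k : ℕ) :
    IsGaussDominantIndex v r (g ^ k) (k * μ) (k * i) := by
  induction k with
  | zero => simpa using one
  | succ k ih => simpa [add_mul, pow_succ] using ih.mul hg

end IsGaussDominantIndex

theorem LeGaussVal.exists_isGaussDominantIndex {β δ : ℝ} {f : R⟦X⟧} {i₁ : ℕ}
    (hf : LeGaussVal v r β f) (hδ : 0 < δ) (hi₁ : weightedVal v r f i₁ < ↑(β + δ)) :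
    ∃ r' ≥ r, ∃ μ < β + 2 * δ, ∃ i₀, IsGaussDominantIndex v r' f μ i₀ := by
  -- With this `η`, index `i₁` stays below `β + 2δ` for `r + η`,
  -- while all indices `≥ 2 i₁ + 2` rise above it.
  set η := δ / (i₁ + 1) with hη
  have hη0 : 0 < η := by positivity
  have hηi₁ : η * (i₁ + 1) = δ := div_mul_cancel₀ _ (by positivity)
  have hw : ∀ i, weightedVal v (r + η) f i = weightedVal v r f i + ((i * η : ℝ) : WithTop ℝ) := by
    intro i
    unfold weightedVal
    rw [add_assoc, ← WithTop.coe_add, mul_add]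
  have hlt : weightedVal v (r + η) f i₁ < ↑(β + 2 * δ) := by
    rw [hw]
    calc _ < ((β + δ : ℝ) : WithTop ℝ) + ((i₁ * η : ℝ) : WithTop ℝ) :=
          WithTop.add_lt_add_right WithTop.coe_ne_top hi₁
      _ ≤ ↑(β + 2 * δ) := by
          rw [← WithTop.coe_add]
          exact WithTop.coe_le_coe.2 (by nlinarith)
  have hfar : ∀ i, 2 * i₁ + 2 ≤ i → weightedVal v (r + η) f i₁ < weightedVal v (r + η) f i := by
    intro i hi
    have hi' : (2 * i₁ + 2 : ℝ) ≤ i := by exact_mod_cast hi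
    refine hlt.trans_le ?_
    calc ((β + 2 * δ : ℝ) : WithTop ℝ) ≤ (β : WithTop ℝ) + ((i * η : ℝ) : WithTop ℝ) := by
          rw [← WithTop.coe_add]
          exact WithTop.coe_le_coe.2 (by nlinarith)
      _ ≤ weightedVal v (r + η) f i := by
          rw [hw]
          gcongr
          exact hf i
  obtain ⟨i₀, hmin, hfirst⟩ := exists_least_minimizer (weightedVal v (r + η) f) hfar
  obtain ⟨μ, hμ⟩ := WithTop.ne_top_iff_exists.1 (ne_top_of_lt ((hmin i₁).trans_lt hlt))
  exact ⟨r + η, by linarith, μ, WithTop.coe_lt_coe.1 (hμ ▸ (hmin i₁).trans_lt hlt), i₀,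
    fun i => hμ ▸ hmin i, hμ.symm, fun i hi => hμ ▸ hfirst i hi⟩

theorem LeGaussVal.exists_weightedVal_pow_lt {β ε : ℝ} {f : R⟦X⟧} (hf : LeGaussVal v r β f)
    (happrox : ∀ ε : ℝ, 0 < ε → ∃ i, weightedVal v r f i < ↑(β + ε)) (k : ℕ) (hε : 0 < ε) :
    ∃ n, weightedVal v r (f ^ k) n < ↑(k * β + ε) := by
  set δ := ε / (2 * (k + 1)) with hδ
  obtain ⟨i₁, hi₁⟩ := happrox δ (by positivity)
  obtain ⟨r', hr', μ, hμ, i₀, hdom⟩ := hf.exists_isGaussDominantIndex (by positivity) hi₁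
  have hkμ : (k : ℝ) * μ < k * β + ε := by
    have hδ0 : 0 < δ := by positivity
    have h2δ : 2 * δ * (k + 1) = ε := by
      rw [hδ]
      field_simp
    nlinarith [mul_le_mul_of_nonneg_left hμ.le (Nat.cast_nonneg (α := ℝ) k)]
  exact ⟨k * i₀, (weightedVal_mono hr' _ _).trans_lt
    ((hdom.pow k).eq.trans_lt (WithTop.coe_lt_coe.2 hkμ))⟩

theorem leGaussVal_add_pow_sub_pow_sub_pow {p : ℕ} (hp : p.Prime) (hvp : v (p : R) = 1) {β : ℝ}
    {H f : R⟦X⟧} (hH : LeGaussVal v r 0 H) (hf : LeGaussVal v r β f) (hβ : 0 ≤ β) :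
    LeGaussVal v r (1 + β) ((H + f) ^ p - H ^ p - f ^ p) := by
  rw [add_pow_prime_eq' hp, add_assoc, add_sub_cancel_left, add_sub_cancel_left]
  refine (leGaussVal_natCast (by rw [hvp, WithTop.coe_one])).mul (LeGaussVal.sum fun k hk => ?_)
  have hpk : (1 : ℝ) ≤ (p - k : ℕ) := by
    rw [mem_Ioo] at hk
    exact_mod_cast (by omega : 1 ≤ p - k)
  refine LeGaussVal.mono ?_ (((hH.pow k).mul (hf.pow (p - k))).mul
    (leGaussVal_natCast (by rw [WithTop.coe_zero]; exact v.map_natCast_nonneg _)))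
  nlinarith

theorem LeGaussVal.le_weightedVal_prime_pow {p : ℕ} (hp : p.Prime) (hvp : v (p : R) = 1)
    {β : ℝ} {f : R⟦X⟧} (hf : LeGaussVal v r β f) {n : ℕ} (hpn : ¬ p ∣ n) :
    ((1 + p * β : ℝ) : WithTop ℝ) ≤ weightedVal v r (f ^ p) n := by
  have hn : v (n : R) = 0 := v.map_natCast_eq_zero_of_coprime hp.one_lt
    (by rw [hvp]; exact zero_lt_one) (hp.coprime_iff_not_dvd.2 hpn).symm
  have h := hf.le_weightedVal_pow hp.pos hn
  rwa [hvp, ← WithTop.coe_one, ← WithTop.coe_add, add_comm] at h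

end GaussValuation

theorem stmt7_general (p : ℕ) (hp : p.Prime)
    (C : Type) [Field C]
    (v : AddValuation C (WithTop ℝ)) (hvp : v (p : C) = 1)
    (r : ℝ)
    (H : PowerSeries C)
    (hH : ∀ i : ℕ, (0 : WithTop ℝ) ≤ v (PowerSeries.coeff (R := C) i H) + (((i : ℝ) * r : ℝ) : WithTop ℝ))
    (f : PowerSeries C)
    (β : ℝ) (hβ0 : 0 ≤ β) (hβ1 : β < 1 / ((p : ℝ) - 1))
    (hβlb : ∀ i : ℕ, ((β : ℝ) : WithTop ℝ) ≤
      v (PowerSeries.coeff (R := C) i f) + (((i : ℝ) * r : ℝ) : WithTop ℝ))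
    (hβglb : ∀ ε : ℝ, 0 < ε → ∃ i : ℕ,
      v (PowerSeries.coeff (R := C) i f) + (((i : ℝ) * r : ℝ) : WithTop ℝ) < ((β + ε : ℝ) : WithTop ℝ)) :
    (∀ n : ℕ, (((p : ℝ) * β : ℝ) : WithTop ℝ) ≤
        v (PowerSeries.coeff (R := C) n ((H + f) ^ p - H ^ p)) + (((n : ℝ) * r : ℝ) : WithTop ℝ)) ∧
      (∀ ε : ℝ, 0 < ε → ∃ n : ℕ,
        v (PowerSeries.coeff (R := C) n ((H + f) ^ p - H ^ p)) + (((n : ℝ) * r : ℝ) : WithTop ℝ) <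
          (((p : ℝ) * β + ε : ℝ) : WithTop ℝ)) ∧
      (∀ n : ℕ, 1 ≤ n → ¬ p ∣ n →
        ((1 + β : ℝ) : WithTop ℝ) ≤
          v (PowerSeries.coeff (R := C) n ((H + f) ^ p - H ^ p)) + (((n : ℝ) * r : ℝ) : WithTop ℝ)) ∧
      (p : ℝ) * β < 1 + β := by
  have hf : LeGaussVal v r β f := hβlb
  have hH0 : LeGaussVal v r 0 H := by simpa [LeGaussVal, weightedVal] using hH
  have hpβ : (p : ℝ) * β < 1 + β := by
    have hp1 : (0 : ℝ) < p - 1 := by linarith [(Nat.one_lt_cast (α := ℝ)).2 hp.one_lt]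
    have := (lt_div_iff₀' hp1).1 hβ1
    linarith
  have hrest := leGaussVal_add_pow_sub_pow_sub_pow hp hvp hH0 hf hβ0
  have hsplit : (H + f) ^ p - H ^ p = f ^ p + ((H + f) ^ p - H ^ p - f ^ p) := by ring
  refine ⟨?_, fun ε hε => ?_, fun n _ hpn => ?_, hpβ⟩
  · rw [hsplit]
    exact (hf.pow p).add (hrest.mono hpβ.le)
  · obtain ⟨n, hn⟩ := hf.exists_weightedVal_pow_lt hβglb p (lt_min hε (sub_pos.2 hpβ))
    have hlt := hn.trans_le
      ((WithTop.coe_le_coe.2 (by linarith [min_le_right ε (1 + β - p * β)])).trans (hrest n))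
    refine ⟨n, ?_⟩
    rw [hsplit]
    exact (weightedVal_add_eq_of_lt hlt).trans_lt
      (hn.trans_le (WithTop.coe_le_coe.2 (by linarith [min_le_left ε (1 + β - p * β)])))
  · have hβpβ : β ≤ p * β := le_mul_of_one_le_left hβ0 (by exact_mod_cast hp.one_lt.le)
    rw [hsplit]
    refine le_trans (le_min ?_ (hrest n)) (min_weightedVal_le_weightedVal_add _ _ n)
    exact (WithTop.coe_le_coe.2 (by linarith)).trans (hf.le_weightedVal_prime_pow hp hvp hpn)

/-- Let `r ≥ 0`.  Let `H = Σ_{i ≥ 0} h_i T^i ∈ C[[T]]` satisfy `v (h_i) + i * r ≥ 0` for all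
`i`, and let `f = Σ_{i ≥ 1} f_i T^i ∈ T·C[[T]]` be such that `β := v_r (f)` (the Gauss
valuation `inf_i (v (f_i) + i * r)`, expressed below as a lower bound together with an
approximation property) satisfies `0 ≤ β < 1 / (p - 1)`.  Then
`v_r ((H + f)^p - H^p) = p * β` (lower bound plus approximation), and for every index `n ≥ 1`
not divisible by `p`, the `n`-th coefficient `c_n` of `(H + f)^p - H^p` satisfies
`v (c_n) + n * r ≥ 1 + β > p * β`.  In particular the Gauss valuation `p * β` can only be
attained by coefficients whose degree is divisible by `p`. -/
theorem stmt7 (p : ℕ) (hp : p.Prime)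
    (C : Type) [Field C] [IsAlgClosed C] [CharZero C]
    (v : AddValuation C (WithTop ℝ)) (hvp : v (p : C) = 1)
    (r : ℝ) (hr : 0 ≤ r)
    (H : PowerSeries C)
    (hH : ∀ i : ℕ, (0 : WithTop ℝ) ≤ v (PowerSeries.coeff (R := C) i H) + (((i : ℝ) * r : ℝ) : WithTop ℝ))
    (f : PowerSeries C) (hf0 : PowerSeries.coeff (R := C) 0 f = 0)
    (β : ℝ) (hβ0 : 0 ≤ β) (hβ1 : β < 1 / ((p : ℝ) - 1))
    (hβlb : ∀ i : ℕ, ((β : ℝ) : WithTop ℝ) ≤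
      v (PowerSeries.coeff (R := C) i f) + (((i : ℝ) * r : ℝ) : WithTop ℝ))
    (hβglb : ∀ ε : ℝ, 0 < ε → ∃ i : ℕ,
      v (PowerSeries.coeff (R := C) i f) + (((i : ℝ) * r : ℝ) : WithTop ℝ) < ((β + ε : ℝ) : WithTop ℝ)) :
    (∀ n : ℕ, (((p : ℝ) * β : ℝ) : WithTop ℝ) ≤
        v (PowerSeries.coeff (R := C) n ((H + f) ^ p - H ^ p)) + (((n : ℝ) * r : ℝ) : WithTop ℝ)) ∧
      (∀ ε : ℝ, 0 < ε → ∃ n : ℕ,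
        v (PowerSeries.coeff (R := C) n ((H + f) ^ p - H ^ p)) + (((n : ℝ) * r : ℝ) : WithTop ℝ) <
          (((p : ℝ) * β + ε : ℝ) : WithTop ℝ)) ∧
      (∀ n : ℕ, 1 ≤ n → ¬ p ∣ n →
        ((1 + β : ℝ) : WithTop ℝ) ≤
          v (PowerSeries.coeff (R := C) n ((H + f) ^ p - H ^ p)) + (((n : ℝ) * r : ℝ) : WithTop ℝ)) ∧
      (p : ℝ) * β < 1 + β :=
  stmt7_general p hp C v hvp r H hH f β hβ0 hβ1 hβlb hβglb
end
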